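/- Let C = c₁c₂ᵀ ∈ ℝ^{M×N} be a rank-one (separable) matrix and let ψ ∈ ℝ^N satisfy Cψ ≠ 0. Then for every G ∈ ℝ^{M×N} the following identity holds: ‖C‖_F²·‖Gψ‖² + 4·tr(CGᵀ)·⟨Cψ, Gψ⟩ + ‖G‖_F²·‖Cψ‖² − 2·⟨Gψ, G(CᵀCψ)⟩ − ‖GᵀCψ‖² − 2·⟨Cψ, G(CᵀGψ)⟩ − ‖CᵀGψ‖² = ‖ ‖Cψ‖·G − (1/‖Cψ‖)·(Gψ)(CᵀCψ)ᵀ ‖_F² − ‖GᵀCψ − CᵀGψ‖². (This is the quadratic coefficient in t of the polynomial t ↦ ‖C+tG‖_F²·‖(C+tG)ψ‖² − ‖(C+tG)ᵀ(C+tG)ψ‖², rewritten in closed form under separability.) -/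

import Mathlib

/-!
Expanding the Frobenius norm on the right turns the identity into two facts about a rank-one
`C = c₁c₂ᵀ`. First, `Cψ` is a multiple of `c₁`, so `‖CᵀCψ‖² = ‖C‖_F²·‖Cψ‖²`, which makes the
term `‖Cψ‖⁻²·‖Gψ‖²·‖CᵀCψ‖²` equal to `‖C‖_F²·‖Gψ‖²`. Second, `Cᵀx = ⟨c₁, x⟩·c₂`, so
`⟨Cψ, G(Cᵀx)⟩ = tr(CGᵀ)·⟨Cψ, x⟩`; with `x = Gψ`, both `⟨Cψ, G(CᵀGψ)⟩` and the cross term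
`⟨GᵀCψ, CᵀGψ⟩` of `‖GᵀCψ − CᵀGψ‖²` equal `tr(CGᵀ)·⟨Cψ, Gψ⟩`.
-/

open scoped BigOperators
open Matrix

noncomputable section

/-- Squared Frobenius norm of a real matrix: `‖A‖_F² = ∑ᵢⱼ A i j ^ 2`. -/
def frobSq {M N : ℕ} (A : Matrix (Fin M) (Fin N) ℝ) : ℝ := ∑ i, ∑ j, A i j ^ 2

/-- Squared Euclidean norm of a vector. -/
def vnormSq {n : ℕ} (x : Fin n → ℝ) : ℝ := ∑ i, x i ^ 2

/-- Euclidean inner product of two vectors. -/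
def vdot {n : ℕ} (x y : Fin n → ℝ) : ℝ := ∑ i, x i * y i

section

variable {m n : ℕ}

lemma vdot_eq_dotProduct (x y : Fin n → ℝ) : vdot x y = x ⬝ᵥ y := rfl

lemma vnormSq_eq_dotProduct (x : Fin n → ℝ) : vnormSq x = x ⬝ᵥ x := by
  simp only [vnormSq, dotProduct, sq]

lemma vnormSq_pos {x : Fin n → ℝ} (hx : x ≠ 0) : 0 < vnormSq x := by
  simpa [vnormSq_eq_dotProduct] using (dotProduct_self_star_pos_iff (v := x)).2 hx

lemma vnormSq_smul (a : ℝ) (x : Fin n → ℝ) : vnormSq (a • x) = a ^ 2 * vnormSq x := by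
  simp only [vnormSq_eq_dotProduct, dotProduct_smul, smul_dotProduct, smul_eq_mul]; ring

lemma vnormSq_sub (x y : Fin n → ℝ) :
    vnormSq (x - y) = vnormSq x - 2 * vdot x y + vnormSq y := by
  simp only [vnormSq_eq_dotProduct, vdot_eq_dotProduct, sub_dotProduct, dotProduct_sub,
    dotProduct_comm y x]
  ring

lemma vdot_mulVec (A : Matrix (Fin m) (Fin n) ℝ) (x : Fin m → ℝ) (y : Fin n → ℝ) :
    vdot x (A *ᵥ y) = vdot (Aᵀ *ᵥ x) y := by
  rw [vdot_eq_dotProduct, vdot_eq_dotProduct, dotProduct_mulVec, mulVec_transpose]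

lemma frobSq_eq_sum_vnormSq_row (A : Matrix (Fin m) (Fin n) ℝ) :
    frobSq A = ∑ i, vnormSq (A i) := rfl

lemma vecMulVec_row (u : Fin m → ℝ) (v : Fin n → ℝ) (i : Fin m) : vecMulVec u v i = u i • v :=
  rfl

lemma frobSq_vecMulVec (u : Fin m → ℝ) (v : Fin n → ℝ) :
    frobSq (vecMulVec u v) = vnormSq u * vnormSq v := by
  simp only [frobSq_eq_sum_vnormSq_row, vecMulVec_row, vnormSq_smul, ← Finset.sum_mul]
  rfl

lemma frobSq_smul_sub_smul_vecMulVec (a b : ℝ) (G : Matrix (Fin m) (Fin n) ℝ)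
    (u : Fin m → ℝ) (v : Fin n → ℝ) :
    frobSq (a • G - b • vecMulVec u v)
      = a ^ 2 * frobSq G - 2 * (a * b) * vdot u (G *ᵥ v) + b ^ 2 * frobSq (vecMulVec u v) := by
  have hrow : ∀ i, (a • G - b • vecMulVec u v) i = a • G i - b • vecMulVec u v i := fun _ => rfl
  have hmulVec : u ⬝ᵥ G *ᵥ v = ∑ i, u i * (G i ⬝ᵥ v) := rfl
  simp only [frobSq_eq_sum_vnormSq_row, hrow, vnormSq_sub, vnormSq_smul, vdot_eq_dotProduct,
    smul_dotProduct, dotProduct_smul, smul_eq_mul, Finset.sum_add_distrib, Finset.sum_sub_distrib,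
    Finset.mul_sum, vecMulVec_row, hmulVec]
  congr 2
  exact Finset.sum_congr rfl fun i _ => by ring

section RankOne

variable (c₁ : Fin m → ℝ) (c₂ : Fin n → ℝ)

lemma vecMulVec_mulVec_eq_smul (x : Fin n → ℝ) :
    vecMulVec c₁ c₂ *ᵥ x = (c₂ ⬝ᵥ x) • c₁ := by
  ext i; simp [vecMulVec_mulVec, mul_comm]

lemma trace_vecMulVec_mul_transpose (G : Matrix (Fin m) (Fin n) ℝ) :
    trace (vecMulVec c₁ c₂ * Gᵀ) = c₁ ⬝ᵥ G *ᵥ c₂ := by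
  rw [vecMulVec_mul, trace_vecMulVec, vecMul_transpose]

lemma vnormSq_transpose_mulVec_mulVec_vecMulVec (ψ : Fin n → ℝ) :
    vnormSq ((vecMulVec c₁ c₂)ᵀ *ᵥ (vecMulVec c₁ c₂ *ᵥ ψ))
      = frobSq (vecMulVec c₁ c₂) * vnormSq (vecMulVec c₁ c₂ *ᵥ ψ) := by
  simp only [transpose_vecMulVec, vecMulVec_mulVec_eq_smul, frobSq_vecMulVec, vnormSq_smul,
    dotProduct_smul, smul_eq_mul, ← vnormSq_eq_dotProduct]
  ring

lemma vdot_mulVec_transpose_mulVec_vecMulVec (ψ : Fin n → ℝ)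
    (G : Matrix (Fin m) (Fin n) ℝ) (x : Fin m → ℝ) :
    vdot (vecMulVec c₁ c₂ *ᵥ ψ) (G *ᵥ ((vecMulVec c₁ c₂)ᵀ *ᵥ x))
      = trace (vecMulVec c₁ c₂ * Gᵀ) * vdot (vecMulVec c₁ c₂ *ᵥ ψ) x := by
  simp only [transpose_vecMulVec, vecMulVec_mulVec_eq_smul, trace_vecMulVec_mul_transpose,
    mulVec_smul, vdot_eq_dotProduct, dotProduct_smul, smul_dotProduct, smul_eq_mul]
  ring

end RankOne

end

/-- closed form, under separability `C = c₁c₂ᵀ` with `Cψ ≠ 0`, of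
the quadratic coefficient in `t` of
`t ↦ ‖C+tG‖_F²·‖(C+tG)ψ‖² − ‖(C+tG)ᵀ(C+tG)ψ‖²`:
`‖C‖_F²·‖Gψ‖² + 4·tr(CGᵀ)·⟨Cψ,Gψ⟩ + ‖G‖_F²·‖Cψ‖² − 2·⟨Gψ, G(CᵀCψ)⟩ − ‖GᵀCψ‖²
  − 2·⟨Cψ, G(CᵀGψ)⟩ − ‖CᵀGψ‖²
  = ‖ ‖Cψ‖·G − (1/‖Cψ‖)·(Gψ)(CᵀCψ)ᵀ ‖_F² − ‖GᵀCψ − CᵀGψ‖²`. -/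
theorem statement5 (M N : ℕ) (c₁ : Fin M → ℝ) (c₂ : Fin N → ℝ)
    (C : Matrix (Fin M) (Fin N) ℝ) (hC : C = vecMulVec c₁ c₂)
    (ψ : Fin N → ℝ) (hψ : C.mulVec ψ ≠ 0)
    (G : Matrix (Fin M) (Fin N) ℝ) :
    frobSq C * vnormSq (G.mulVec ψ)
      + 4 * Matrix.trace (C * Gᵀ) * vdot (C.mulVec ψ) (G.mulVec ψ)
      + frobSq G * vnormSq (C.mulVec ψ)
      - 2 * vdot (G.mulVec ψ) (G.mulVec (Cᵀ.mulVec (C.mulVec ψ)))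
      - vnormSq (Gᵀ.mulVec (C.mulVec ψ))
      - 2 * vdot (C.mulVec ψ) (G.mulVec (Cᵀ.mulVec (G.mulVec ψ)))
      - vnormSq (Cᵀ.mulVec (G.mulVec ψ))
    = frobSq (Real.sqrt (vnormSq (C.mulVec ψ)) • G -
          (Real.sqrt (vnormSq (C.mulVec ψ)))⁻¹ •
            vecMulVec (G.mulVec ψ) (Cᵀ.mulVec (C.mulVec ψ)))
      - vnormSq (Gᵀ.mulVec (C.mulVec ψ) - Cᵀ.mulVec (G.mulVec ψ)) := by
  subst hC
  set s := vnormSq (vecMulVec c₁ c₂ *ᵥ ψ)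
  have hs : 0 < s := vnormSq_pos hψ
  have hsqrt : √s ^ 2 = s := Real.sq_sqrt hs.le
  rw [frobSq_smul_sub_smul_vecMulVec, frobSq_vecMulVec (G *ᵥ ψ),
    vnormSq_transpose_mulVec_mulVec_vecMulVec, vnormSq_sub, ← vdot_mulVec, vdot_mulVec_transpose_mulVec_vecMulVec]
  field_simp
  rw [hsqrt]
  ring

end
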